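/- In a pointed finitely complete category, every strongly unital object is a unital object. -/

import Mathlib

/-!
Pulling back a point of the form `(π₁, ⟨1, t⟩)` on `Y ⨯ Z` along `g : X ⟶ Y` gives, up to
isomorphism, the point `(π₁, ⟨1, g ≫ t⟩)` on `X ⨯ Z`, and strong points are invariant under
isomorphism. So the pullback of the unital point `(π₁, ⟨1, 0⟩)` along any `g` and the pullback of
the diagonal point `(π₁, Δ)` along `0` are both the point `(π₁, ⟨1, 0⟩)` on `X ⨯ Y`.
-/

open CategoryTheory CategoryTheory.Limits

universe v u

variable {C : Type u} [Category.{v} C]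

/-- A cospan `(r, s)` is jointly strongly epimorphic: whenever both `r` and `s`
factor through a monomorphism `m`, the monomorphism `m` is an isomorphism. -/
def JointlyStronglyEpi {X Y A : C} (r : X ⟶ A) (s : Y ⟶ A) : Prop :=
  ∀ ⦃M : C⦄ (m : M ⟶ A), Mono m →
    (∃ r' : X ⟶ M, r' ≫ m = r) → (∃ s' : Y ⟶ M, s' ≫ m = s) → IsIso m

/-- A point `(f, s)` over `B` is strong: for every `g : X ⟶ B`, the second
projection of the pullback of `f` along `g` together with `s` is a jointly
strongly epimorphic pair. -/
def IsStrongPoint [HasPullbacks C] {A B : C} (f : A ⟶ B) (s : B ⟶ A) : Prop :=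
  ∀ ⦃X : C⦄ (g : X ⟶ B), JointlyStronglyEpi (pullback.snd g f) s

/-- A point `(f, s)` over `B` is stably strong: every pullback of it along a
morphism `g : X ⟶ B` is a strong point. -/
def IsStablyStrongPoint [HasPullbacks C] {A B : C} (f : A ⟶ B) (s : B ⟶ A)
    (hs : s ≫ f = 𝟙 B) : Prop :=
  ∀ ⦃X : C⦄ (g : X ⟶ B),
    IsStrongPoint (pullback.fst g f)
      (pullback.lift (𝟙 X) (g ≫ s) (by simp [hs]))

/-- An object `Y` is a Mal'tsev object: for every pullback of split
epimorphisms over `Y`, the two induced sections are jointly strongly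
epimorphic. -/
def IsMaltsevObject [HasPullbacks C] (Y : C) : Prop :=
  ∀ ⦃A X : C⦄ (f : A ⟶ Y) (s : Y ⟶ A) (g : X ⟶ Y) (t : Y ⟶ X)
    (hs : s ≫ f = 𝟙 Y) (ht : t ≫ g = 𝟙 Y),
    JointlyStronglyEpi
      (pullback.lift (𝟙 A) (f ≫ t) (by simp [ht]) : A ⟶ pullback f g)
      (pullback.lift (g ≫ s) (𝟙 X) (by simp [hs]) : X ⟶ pullback f g)

/-- An object `Y` is protomodular: every point over `Y` is stably strong. -/
def IsProtomodularObject [HasPullbacks C] (Y : C) : Prop :=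
  ∀ ⦃A : C⦄ (f : A ⟶ Y) (s : Y ⟶ A) (hs : s ≫ f = 𝟙 Y), IsStablyStrongPoint f s hs

/-- `f` is a regular epimorphism. -/
def IsRegularEpi {X Y : C} (f : X ⟶ Y) : Prop := Nonempty (RegularEpi f)

/-- A commutative square `f' ≫ β = α ≫ f` of regular epimorphisms is a regular
pushout if the comparison morphism into the pullback of `β` and `f` is a
regular epimorphism. -/
def IsRegularPushout [HasPullbacks C] {A' A B' B : C}
    (α : A' ⟶ A) (f' : A' ⟶ B') (f : A ⟶ B) (β : B' ⟶ B)
    (w : f' ≫ β = α ≫ f) : Prop :=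
  _root_.IsRegularEpi α ∧ _root_.IsRegularEpi β ∧ _root_.IsRegularEpi f' ∧ _root_.IsRegularEpi f ∧
    _root_.IsRegularEpi (pullback.lift f' α w)

/-- `Y` is a strongly unital object. -/
def StronglyUnitalObject [HasPullbacks C] [HasBinaryProducts C] (Y : C) : Prop :=
  IsStablyStrongPoint (prod.fst : Y ⨯ Y ⟶ Y) (prod.lift (𝟙 Y) (𝟙 Y)) (by first | simp | exact prod.lift_fst _ _ | exact limit.lift_π _ _)

/-- `Y` is a unital object. -/
def UnitalObject [HasPullbacks C] [HasBinaryProducts C] [HasZeroMorphisms C]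
    (Y : C) : Prop :=
  IsStablyStrongPoint (prod.fst : Y ⨯ Y ⟶ Y) (prod.lift (𝟙 Y) 0) (by first | simp | exact prod.lift_fst _ _ | exact limit.lift_π _ _)

/-- `Y` is a subtractive object: for every split right punctual span
`(s, f, g, t)` over `Y`, the composite `ker(g) ≫ f` is a regular epimorphism. -/
def SubtractiveObject [HasZeroMorphisms C] [HasKernels C] (Y : C) : Prop :=
  ∀ ⦃X Z : C⦄ (s : X ⟶ Z) (f : Z ⟶ X) (g : Z ⟶ Y) (t : Y ⟶ Z),
    s ≫ f = 𝟙 X → t ≫ g = 𝟙 Y → t ≫ f = 0 →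
    _root_.IsRegularEpi (kernel.ι g ≫ f)

namespace JointlyStronglyEpi

variable {X X' Y A A' : C} {r : X ⟶ A} {s : Y ⟶ A}

theorem of_comp_iso (φ : A ⟶ A') [IsIso φ] (h : JointlyStronglyEpi (r ≫ φ) (s ≫ φ)) :
    JointlyStronglyEpi r s := by
  rintro M m hm ⟨r', hr'⟩ ⟨s', hs'⟩
  have : IsIso (m ≫ φ) :=
    h (m ≫ φ) inferInstance ⟨r', by rw [← hr', Category.assoc]⟩
      ⟨s', by rw [← hs', Category.assoc]⟩
  exact IsIso.of_isIso_comp_right m φ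

theorem of_precomp_left (ψ : X' ⟶ X) (h : JointlyStronglyEpi (ψ ≫ r) s) :
    JointlyStronglyEpi r s := by
  rintro M m hm ⟨r', hr'⟩ hs
  exact h m hm ⟨ψ ≫ r', by rw [Category.assoc, hr']⟩ hs

end JointlyStronglyEpi

section Points

variable [HasPullbacks C]

theorem IsStrongPoint.of_iso {A A' B : C} {f : A ⟶ B} {s : B ⟶ A} {f' : A' ⟶ B} {s' : B ⟶ A'}
    (e : A ≅ A') (hf : e.hom ≫ f' = f) (hs : s ≫ e.hom = s') (h : IsStrongPoint f' s') :
    IsStrongPoint f s := by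
  intro X k
  let ψ : pullback k f' ⟶ pullback k f :=
    pullback.lift (pullback.fst k f') (pullback.snd k f' ≫ e.inv)
      (by rw [Category.assoc, ← hf, e.inv_hom_id_assoc, pullback.condition])
  refine .of_comp_iso e.hom (.of_precomp_left ψ ?_)
  rw [hs, pullback.lift_snd_assoc, Category.assoc, e.inv_hom_id, Category.comp_id]
  exact h k

variable [HasBinaryProducts C]

theorem isStrongPoint_pullback_prod_fst_iff {X Y Z : C} (g : X ⟶ Y) (t : Y ⟶ Z) :
    IsStrongPoint (pullback.fst g (prod.fst : Y ⨯ Z ⟶ Y))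
        (pullback.lift (𝟙 X) (g ≫ prod.lift (𝟙 Y) t) (by simp [prod.lift_fst])) ↔
      IsStrongPoint (prod.fst : X ⨯ Z ⟶ X) (prod.lift (𝟙 X) (g ≫ t)) := by
  let e := pullbackProdFstIsoProd g Z
  have hs : pullback.lift (𝟙 X) (g ≫ prod.lift (𝟙 Y) t) (by simp [prod.lift_fst]) ≫ e.hom =
      prod.lift (𝟙 X) (g ≫ t) := by
    ext <;> simp [e, prod.lift_fst, prod.lift_snd, pullback.lift_fst, pullback.lift_snd_assoc]
  constructor
  · refine .of_iso e.symm (by simp [e]) ?_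
    rw [← hs, Category.assoc, Iso.symm_hom, e.hom_inv_id, Category.comp_id]
  · exact .of_iso e (by simp [e]) hs

end Points

theorem statement11_general [HasFiniteLimits C] [HasZeroMorphisms C]
    (Y : C) (h : StronglyUnitalObject Y) : UnitalObject Y := by
  intro X g
  have h₀ := (isStrongPoint_pullback_prod_fst_iff (0 : X ⟶ Y) (𝟙 Y)).mp (h 0)
  rw [Category.comp_id] at h₀
  rw [isStrongPoint_pullback_prod_fst_iff, comp_zero]
  exact h₀

/-- In a pointed finitely complete category, every strongly unital object is a
unital object. -/
theorem statement11 [HasFiniteLimits C] [HasZeroObject C] [HasZeroMorphisms C]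
    (Y : C) (h : StronglyUnitalObject Y) : UnitalObject Y :=
  statement11_general Y h
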